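/- Let d be even, X and Z the generalized Pauli operators on ℂ^d, and P the parity operator. For (q,p) ∈ ℤ_{2d} × ℤ_{2d}, the operators F(q,p) = (1/(4d²)) X^q Z^p P e^{iπqp/d} are Hermitian, and the family {F(q,p)} spans Herm(ℂ^d), hence is a frame; since |ℤ_{2d} × ℤ_{2d}| = 4d² > d², this frame is not a basis and its dual frame is not unique. -/

import Mathlib

noncomputable section

open Matrix

/-- The shift (generalized Pauli X) operator: `X φ_k = φ_{k+1}`. -/
def pauliX (d : ℕ) [NeZero d] : Matrix (ZMod d) (ZMod d) ℂ :=
  Matrix.of fun k l => if k = l + 1 then 1 else 0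

/-- The clock (generalized Pauli Z) operator: `Z φ_k = ω^k φ_k`, `ω = e^{2πi/d}`. -/
def pauliZ (d : ℕ) [NeZero d] : Matrix (ZMod d) (ZMod d) ℂ :=
  Matrix.diagonal fun k => Complex.exp (2 * Real.pi * Complex.I * k.val / d)

/-- The parity operator: `P φ_k = φ_{-k}`. -/
def parityP (d : ℕ) [NeZero d] : Matrix (ZMod d) (ZMod d) ℂ :=
  Matrix.of fun k l => if k = -l then 1 else 0

/-- Leonhardt's frame `F(q,p) = (1/(4d²)) X^q Z^p P e^{iπqp/d}` for `(q,p) ∈ ℤ_{2d} × ℤ_{2d}`. -/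
def leonhardtF (d : ℕ) [NeZero d] (q p : ZMod (2 * d)) : Matrix (ZMod d) (ZMod d) ℂ :=
  ((4 * (d : ℂ) ^ 2)⁻¹ * Complex.exp (Real.pi * Complex.I * q.val * p.val / d)) •
    (pauliX d ^ q.val * pauliZ d ^ p.val * parityP d)

/-!
Let `e` and `ψ` be the standard additive characters of `ℤ_{2d}` and `ℤ_d`. The entries of the
frame are `F(q,p)_{kl} = [k + l = q] e(qp) ψ(-lp) / (4d²)`, and `e(x)² = ψ(x mod d)`. This makes
each `F(q,p)` Hermitian, and orthogonality of characters gives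
`∑ tr (F(q,p) A) F(q,p) = A / (4d³)` for every matrix `A`, with real coefficients when `A` is
Hermitian. Hence the `F(q,p)` span `Herm(ℂ^d)` with dual frame `4d³ F`. Since
`F(d,1) = -F(0,1)`, the family is linearly dependent, and adding a multiple of this relation to
the dual frame gives a second dual frame.
-/

open ZMod Finset

section
variable {M : Type*} [AddCommMonoid M]

theorem sum_zmod_eq_sum_range (N : ℕ) [NeZero N] (g : ZMod N → M) :
    ∑ x, g x = ∑ i ∈ range N, g i :=
  Finset.sum_nbij' val (fun i => (i : ZMod N)) (fun x _ => mem_range.2 (val_lt x))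
    (fun _ _ => mem_univ _) (fun x _ => natCast_zmod_val x)
    (fun _ hi => val_cast_of_lt (mem_range.1 hi)) (fun x _ => by rw [natCast_zmod_val])

theorem sum_range_mul_natCast (m n : ℕ) (f : ZMod n → M) :
    ∑ i ∈ range (m * n), f i = m • ∑ i ∈ range n, f i := by
  induction m with
  | zero => simp
  | succ m ih =>
    rw [Nat.succ_mul, sum_range_add, ih, succ_nsmul]
    simp

theorem sum_cast_zmod_mul (m n : ℕ) [NeZero m] [NeZero n] (f : ZMod n → M) :
    ∑ x : ZMod (m * n), f (cast x) = m • ∑ y, f y := by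
  rw [sum_zmod_eq_sum_range, sum_zmod_eq_sum_range, ← sum_range_mul_natCast]
  simp [ZMod.cast_natCast (dvd_mul_left n m)]

end

theorem Matrix.IsHermitian.ofReal_re_trace_mul {n : Type*} [Fintype n] {A B : Matrix n n ℂ}
    (hA : A.IsHermitian) (hB : B.IsHermitian) : ((trace (A * B)).re : ℂ) = trace (A * B) := by
  refine Complex.conj_eq_iff_re.mp ?_
  rw [← Complex.star_def, ← trace_conjTranspose, conjTranspose_mul, hA.eq, hB.eq,
    trace_mul_comm]

theorem sum_trace_mul_smul_add_smul {ι n R : Type*} [Fintype ι] [Fintype n] [CommRing R]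
    (F E : ι → Matrix n n R) {g : ι → R} (hg : ∑ i, g i • F i = 0) (A B : Matrix n n R) :
    ∑ i, trace (F i * A) • (E i + g i • B) = ∑ i, trace (F i * A) • E i := by
  have hcoef : ∑ i, trace (F i * A) * g i = trace ((∑ i, g i • F i) * A) := by
    simp [Finset.sum_mul, trace_sum, mul_comm]
  simp_rw [smul_add, Finset.sum_add_distrib, smul_smul, ← Finset.sum_smul, hcoef, hg, zero_mul,
    trace_zero, zero_smul, add_zero]

section
variable (d : ℕ) [NeZero d]

theorem pauliZ_eq_diagonal : pauliZ d = diagonal fun k => stdAddChar k := by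
  ext k l
  simp only [pauliZ, diagonal_apply, stdAddChar_apply, toCircle_apply]

theorem pauliX_pow_apply (n : ℕ) (k l : ZMod d) :
    (pauliX d ^ n) k l = if k = l + n then 1 else 0 := by
  induction n generalizing k l with
  | zero => simp [one_apply]
  | succ n ih =>
    simp only [pow_succ, mul_apply, ih]
    simp [pauliX, add_assoc, add_comm (1 : ZMod d)]

theorem mul_parityP_apply (A : Matrix (ZMod d) (ZMod d) ℂ) (k l : ZMod d) :
    (A * parityP d) k l = A k (-l) := by
  simp [mul_apply, parityP]

theorem pauliX_pow_mul_pauliZ_pow_mul_parityP_apply (a b : ℕ) (k l : ZMod d) :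
    (pauliX d ^ a * pauliZ d ^ b * parityP d) k l =
      if k + l = a then stdAddChar (-(l * (b : ZMod d))) else 0 := by
  rw [mul_parityP_apply, pauliZ_eq_diagonal, diagonal_pow, mul_diagonal, pauliX_pow_apply]
  simp only [Pi.pow_apply, ← AddChar.map_nsmul_eq_pow, nsmul_eq_mul, ite_mul, one_mul, zero_mul]
  refine if_congr ?_ (by ring_nf) rfl
  constructor <;> intro h <;> linear_combination h

theorem stdAddChar_mul_self (x : ZMod (2 * d)) :
    stdAddChar x * stdAddChar x = stdAddChar (N := d) (cast x) := by
  have hd : (d : ℂ) ≠ 0 := NeZero.ne _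
  rw [← natCast_zmod_val x, ZMod.cast_natCast (dvd_mul_left d 2), stdAddChar_apply,
    stdAddChar_apply, toCircle_natCast, toCircle_natCast, ← Complex.exp_add]
  congr 1
  push_cast
  field_simp
  ring

theorem stdAddChar_neg (x : ZMod (2 * d)) :
    stdAddChar (-x) = stdAddChar (N := d) (-cast x) * stdAddChar x := by
  rw [← ZMod.cast_neg (dvd_mul_left d 2), ← stdAddChar_mul_self, mul_assoc,
    ← AddChar.map_add_eq_mul, neg_add_cancel, AddChar.map_zero_eq_one, mul_one]

theorem stdAddChar_mul_eq_exp (q p : ZMod (2 * d)) :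
    stdAddChar (q * p) = Complex.exp (Real.pi * Complex.I * q.val * p.val / d) := by
  have hd : (d : ℂ) ≠ 0 := NeZero.ne _
  rw [← natCast_zmod_val q, ← natCast_zmod_val p, ← Nat.cast_mul, stdAddChar_apply,
    toCircle_natCast, val_natCast_of_lt (val_lt q), val_natCast_of_lt (val_lt p)]
  congr 1
  push_cast
  field_simp

theorem stdAddChar_natCast_self : stdAddChar (d : ZMod (2 * d)) = -1 := by
  rw [stdAddChar_apply, toCircle_natCast, ← Complex.exp_pi_mul_I]
  congr 1
  have hd : (d : ℂ) ≠ 0 := NeZero.ne _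
  push_cast
  field_simp

theorem leonhardtF_apply (q p : ZMod (2 * d)) (k l : ZMod d) :
    leonhardtF d q p k l = if k + l = cast q then
      (4 * (d : ℂ) ^ 2)⁻¹ * (stdAddChar (q * p) * stdAddChar (-(l * cast p))) else 0 := by
  rw [leonhardtF, Matrix.smul_apply, pauliX_pow_mul_pauliZ_pow_mul_parityP_apply,
    stdAddChar_mul_eq_exp, cast_eq_val, cast_eq_val, smul_eq_mul, mul_ite, mul_zero, mul_assoc]

theorem leonhardtF_isHermitian (q p : ZMod (2 * d)) : (leonhardtF d q p).IsHermitian := by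
  ext k l
  rw [conjTranspose_apply, leonhardtF_apply, leonhardtF_apply, add_comm l k]
  split_ifs with h
  · have hc : star (4 * (d : ℂ) ^ 2)⁻¹ = (4 * (d : ℂ) ^ 2)⁻¹ := by simp
    rw [star_mul', star_mul', hc, Complex.star_def, ← AddChar.map_neg_eq_conj,
      ← AddChar.map_neg_eq_conj, stdAddChar_neg, ZMod.cast_mul (dvd_mul_left d 2), ← h,
      mul_comm _ (stdAddChar (q * p)), mul_assoc, ← AddChar.map_add_eq_mul]
    ring_nf
  · exact star_zero _

theorem trace_leonhardtF_mul (q p : ZMod (2 * d)) (A : Matrix (ZMod d) (ZMod d) ℂ) :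
    trace (leonhardtF d q p * A) = ∑ j, (4 * (d : ℂ) ^ 2)⁻¹ *
      (stdAddChar (q * p) * stdAddChar (-(j * cast p))) * A j (cast q - j) := by
  simp only [trace, diag_apply, mul_apply]
  rw [Finset.sum_comm]
  refine Finset.sum_congr rfl fun j _ => ?_
  simp only [leonhardtF_apply, ite_mul, zero_mul, ← eq_sub_iff_add_eq, Finset.sum_ite_eq',
    Finset.mem_univ, if_true]

theorem sum_stdAddChar_cast_mul (b : ZMod d) :
    ∑ p : ZMod (2 * d), stdAddChar (cast p * b) = if b = 0 then 2 * (d : ℂ) else 0 := by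
  rw [sum_cast_zmod_mul 2 d fun y => stdAddChar (y * b),
    AddChar.sum_mulShift b (isPrimitive_stdAddChar d), ZMod.card]
  split_ifs <;> simp

theorem trace_leonhardtF_mul_mul_apply (q p : ZMod (2 * d)) (A : Matrix (ZMod d) (ZMod d) ℂ)
    {k l : ZMod d} (h : k + l = cast q) :
    trace (leonhardtF d q p * A) * leonhardtF d q p k l = ((4 * (d : ℂ) ^ 2)⁻¹) ^ 2 *
      ∑ j, stdAddChar (cast p * (k - j)) * A j (cast q - j) := by
  rw [trace_leonhardtF_mul, leonhardtF_apply, if_pos h, Finset.sum_mul, Finset.mul_sum]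
  refine Finset.sum_congr rfl fun j _ => ?_
  have hphase : stdAddChar (q * p) * stdAddChar (q * p) * stdAddChar (-(j * cast p)) *
      stdAddChar (-(l * cast p)) = stdAddChar (N := d) (cast p * (k - j)) := by
    rw [stdAddChar_mul_self, ZMod.cast_mul (dvd_mul_left d 2), ← h,
      ← AddChar.map_add_eq_mul, ← AddChar.map_add_eq_mul]
    ring_nf
  linear_combination ((4 * (d : ℂ) ^ 2)⁻¹ ^ 2 * A j (cast q - j)) * hphase

theorem sum_trace_leonhardtF_mul_mul_apply (q : ZMod (2 * d)) (A : Matrix (ZMod d) (ZMod d) ℂ)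
    (k l : ZMod d) :
    ∑ p, trace (leonhardtF d q p * A) * leonhardtF d q p k l =
      if k + l = cast q then 2 * d * ((4 * (d : ℂ) ^ 2)⁻¹) ^ 2 * A k l else 0 := by
  split_ifs with h
  · simp_rw [trace_leonhardtF_mul_mul_apply d q _ A h, ← Finset.mul_sum]
    rw [Finset.sum_comm]
    simp_rw [← Finset.sum_mul, sum_stdAddChar_cast_mul, sub_eq_zero, ite_mul, zero_mul,
      Finset.sum_ite_eq, Finset.mem_univ, if_true, ← h, add_sub_cancel_left]
    ring
  · refine Finset.sum_eq_zero fun p _ => ?_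
    rw [leonhardtF_apply, if_neg h, mul_zero]

theorem sum_trace_leonhardtF_mul_smul (A : Matrix (ZMod d) (ZMod d) ℂ) :
    ∑ qp : ZMod (2 * d) × ZMod (2 * d), trace (leonhardtF d qp.1 qp.2 * A) •
      leonhardtF d qp.1 qp.2 = (4 * (d : ℂ) ^ 3)⁻¹ • A := by
  have hd : (d : ℂ) ≠ 0 := NeZero.ne _
  ext k l
  simp only [Fintype.sum_prod_type, Matrix.sum_apply, Matrix.smul_apply, smul_eq_mul,
    sum_trace_leonhardtF_mul_mul_apply]
  rw [sum_cast_zmod_mul 2 d fun y => if k + l = y then _ else 0, Finset.sum_ite_eq,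
    if_pos (Finset.mem_univ _), nsmul_eq_mul]
  field_simp
  ring

theorem leonhardtF_add_natCast (q p : ZMod (2 * d)) :
    leonhardtF d (q + d) p = stdAddChar ((d : ZMod (2 * d)) * p) • leonhardtF d q p := by
  ext k l
  rw [Matrix.smul_apply, leonhardtF_apply, leonhardtF_apply, ZMod.cast_add (dvd_mul_left d 2),
    ZMod.cast_natCast (dvd_mul_left d 2), natCast_self, add_zero, add_mul,
    AddChar.map_add_eq_mul]
  split_ifs <;> simp only [smul_eq_mul, mul_zero]
  ring

theorem leonhardtF_natCast_one : leonhardtF d d 1 = -leonhardtF d 0 1 := by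
  rw [← zero_add (d : ZMod (2 * d)), leonhardtF_add_natCast, mul_one, stdAddChar_natCast_self,
    neg_one_smul]

theorem natCast_ne_zero_zmod_two_mul : (d : ZMod (2 * d)) ≠ 0 := fun h => by
  have := stdAddChar_natCast_self d
  rw [h, AddChar.map_zero_eq_one] at this
  norm_num at this

end

theorem stmt14_general (d : ℕ) [NeZero d] :
    (∀ q p : ZMod (2 * d), (leonhardtF d q p).IsHermitian) ∧
    (∀ A : Matrix (ZMod d) (ZMod d) ℂ, A.IsHermitian →
      A ∈ Submodule.span ℝ
        (Set.range fun qp : ZMod (2 * d) × ZMod (2 * d) => leonhardtF d qp.1 qp.2)) ∧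
    ¬ LinearIndependent ℝ
        (fun qp : ZMod (2 * d) × ZMod (2 * d) => leonhardtF d qp.1 qp.2) ∧
    ∃ E E' : ZMod (2 * d) × ZMod (2 * d) → Matrix (ZMod d) (ZMod d) ℂ,
      E ≠ E' ∧
      (∀ A : Matrix (ZMod d) (ZMod d) ℂ, A.IsHermitian →
        A = ∑ qp : ZMod (2 * d) × ZMod (2 * d),
          Matrix.trace (leonhardtF d qp.1 qp.2 * A) • E qp) ∧
      (∀ A : Matrix (ZMod d) (ZMod d) ℂ, A.IsHermitian →
        A = ∑ qp : ZMod (2 * d) × ZMod (2 * d),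
          Matrix.trace (leonhardtF d qp.1 qp.2 * A) • E' qp) := by
  set F := fun qp : ZMod (2 * d) × ZMod (2 * d) => leonhardtF d qp.1 qp.2
  set E := fun qp => (4 * (d : ℂ) ^ 3) • F qp
  have hF (qp) : (F qp).IsHermitian := leonhardtF_isHermitian d qp.1 qp.2
  have hrec (A : Matrix (ZMod d) (ZMod d) ℂ) : A = ∑ qp, trace (F qp * A) • E qp := by
    have h4 : (4 * (d : ℂ) ^ 3) ≠ 0 := by simp [NeZero.ne d]
    simp_rw [E, smul_comm _ (4 * (d : ℂ) ^ 3), ← Finset.smul_sum, F,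
      sum_trace_leonhardtF_mul_smul, smul_inv_smul₀ h4]
  set s : Finset (ZMod (2 * d) × ZMod (2 * d)) := {(0, 1), ((d : ZMod (2 * d)), 1)}
  have hs : ∑ qp ∈ s, F qp = 0 := by
    rw [Finset.sum_pair (by simpa using (natCast_ne_zero_zmod_two_mul d).symm)]
    simp [F, leonhardtF_natCast_one]
  refine ⟨leonhardtF_isHermitian d, fun A hA => ?_, fun hli => ?_, ?_⟩
  · refine (Submodule.mem_span_range_iff_exists_fun ℝ).2
      ⟨fun qp => 4 * d ^ 3 * (trace (F qp * A)).re, ?_⟩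
    conv_rhs => rw [hrec A]
    refine Finset.sum_congr rfl fun qp _ => ?_
    rw [← Complex.coe_smul, smul_smul]
    push_cast
    rw [(hF qp).ofReal_re_trace_mul hA, mul_comm]
  · have := linearIndependent_iff'.1 hli s (fun _ => 1) (by simpa using hs) (0, 1) (by simp [s])
    exact one_ne_zero this
  · refine ⟨E, fun qp => E qp + (if qp ∈ s then 1 else 0 : ℂ) • 1, fun h => ?_,
      fun A _ => hrec A, fun A _ => ?_⟩
    · simpa [s] using congrFun h (0, 1)
    · have hg : ∑ qp, (if qp ∈ s then 1 else 0 : ℂ) • F qp = 0 := by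
        simpa [ite_smul] using hs
      rw [sum_trace_mul_smul_add_smul F E hg A 1]
      exact hrec A

theorem stmt14 (d : ℕ) [NeZero d] (heven : Even d) :
    (∀ q p : ZMod (2 * d), (leonhardtF d q p).IsHermitian) ∧
    (∀ A : Matrix (ZMod d) (ZMod d) ℂ, A.IsHermitian →
      A ∈ Submodule.span ℝ
        (Set.range fun qp : ZMod (2 * d) × ZMod (2 * d) => leonhardtF d qp.1 qp.2)) ∧
    ¬ LinearIndependent ℝ
        (fun qp : ZMod (2 * d) × ZMod (2 * d) => leonhardtF d qp.1 qp.2) ∧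
    ∃ E E' : ZMod (2 * d) × ZMod (2 * d) → Matrix (ZMod d) (ZMod d) ℂ,
      E ≠ E' ∧
      (∀ A : Matrix (ZMod d) (ZMod d) ℂ, A.IsHermitian →
        A = ∑ qp : ZMod (2 * d) × ZMod (2 * d),
          Matrix.trace (leonhardtF d qp.1 qp.2 * A) • E qp) ∧
      (∀ A : Matrix (ZMod d) (ZMod d) ℂ, A.IsHermitian →
        A = ∑ qp : ZMod (2 * d) × ZMod (2 * d),
          Matrix.trace (leonhardtF d qp.1 qp.2 * A) • E' qp) :=
  stmt14_general d
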